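/- arXiv:1903.09480 — 3 statements merged into one kernel-verified Lean document; each statement's English description precedes it below -/
import Mathlib

section
/- For every z ∈ ℝ + i·ℝ_{>0} (the upper half plane), the Bloch–Wigner function satisfies D(z) = D((z−1)/z) = D(1/(1−z)). -/
/-- The dilogarithm `Li₂(z) = -∫₀^z Log(1-u)/u du`, parametrized along the segment from `0` to
`z`. -/
noncomputable def Li2 (z : ℂ) : ℂ :=
  -∫ t in (0:ℝ)..1, Complex.log (1 - (t : ℂ) * z) / (t : ℂ)

/-- The Bloch–Wigner function `D(z) = Im(Li₂(z)) + arg(1-z)·log|z|`. -/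
noncomputable def blochWigner (z : ℂ) : ℝ :=
  (Li2 z).im + Complex.arg (1 - z) * Real.log ‖z‖

/-!
Differentiating under the integral sign gives `Li₂'(z) = -log(1-z)/z`, hence off the two slits the
real differential of `D` is the 1-form `-log|1-z| · Im(dz/z) - log|z| · Im(dz/(1-z))`. This form is
invariant under `z ↦ 1/(1-z)`, so `D(z) - D(1/(1-z))` is constant on the connected upper half plane,
and it vanishes at the fixed point `e^{iπ/3}`. Applying `z ↦ 1/(1-z)` twice gives `(z-1)/z`.
-/

open Complex Metric Set intervalIntegral MeasureTheory Interval

lemma one_sub_ofReal_mul_mem_slitPlane {z : ℂ} (hz : 1 - z ∈ slitPlane) {t : ℝ}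
    (ht : t ∈ Icc (0 : ℝ) 1) : 1 - t * z ∈ slitPlane := by
  convert starConvex_one_slitPlane.add_smul_sub_mem hz ht.1 ht.2 using 1
  simp only [real_smul]
  ring

lemma exists_ball_forall_one_sub_mul_mem_slitPlane {z : ℂ} (hz : 1 - z ∈ slitPlane) :
    ∃ ε > 0, ∀ x ∈ ball z ε, ∀ t ∈ Icc (0 : ℝ) 1,
      1 - t * x ∈ slitPlane ∧ ε ≤ ‖1 - t * x‖ := by
  have hK : IsCompact ((fun t : ℝ ↦ 1 - t * z) '' Icc 0 1) :=
    isCompact_Icc.image (by fun_prop)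
  obtain ⟨δ, hδ, hsub⟩ := hK.exists_thickening_subset_open isOpen_slitPlane
    (image_subset_iff.2 fun t ht ↦ one_sub_ofReal_mul_mem_slitPlane hz ht)
  refine ⟨δ / 2, half_pos hδ, fun x hx t ht ↦ ?_⟩
  have hball : ball (1 - t * x) (δ / 2) ⊆ slitPlane := by
    refine Subset.trans ?_ (hsub.trans' (ball_subset_thickening (mem_image_of_mem _ ht) δ))
    refine ball_subset_ball' ?_
    have : dist (1 - t * x) (1 - t * z) ≤ dist x z := by
      rw [dist_eq_norm, dist_eq_norm, sub_sub_sub_cancel_left, ← mul_sub, norm_mul, norm_real,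
        Real.norm_of_nonneg ht.1, ← neg_sub, norm_neg]
      exact mul_le_of_le_one_left (norm_nonneg _) ht.2
    linarith [mem_ball.1 hx]
  refine ⟨hball (mem_ball_self (half_pos hδ)), not_lt.1 fun hlt ↦ slitPlane_ne_zero (hball ?_) rfl⟩
  rwa [mem_ball, dist_zero_left]

lemma hasDerivAt_log_one_sub_ofReal_mul {z : ℂ} {t : ℝ} (h : 1 - t * z ∈ slitPlane) :
    HasDerivAt (fun s : ℝ ↦ log (1 - s * z)) (-z / (1 - t * z)) t := by
  have : HasDerivAt (fun s : ℝ ↦ 1 - s * z) (-z) t := by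
    simpa using (ofRealCLM.hasDerivAt.mul_const z).const_sub 1
  exact this.clog_real h

lemma norm_log_one_sub_ofReal_mul_le {z : ℂ} {r : ℝ}
    (h : ∀ s ∈ Icc (0 : ℝ) 1, 1 - s * z ∈ slitPlane ∧ r ≤ ‖1 - s * z‖) (hr : 0 < r) {t : ℝ}
    (ht : t ∈ Icc (0 : ℝ) 1) : ‖log (1 - t * z)‖ ≤ ‖z‖ / r * t := by
  have hderiv : ∀ s ∈ Icc (0 : ℝ) 1, ‖-z / (1 - s * z)‖ ≤ ‖z‖ / r := fun s hs ↦ by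
    rw [norm_div, norm_neg]
    gcongr
    exact (h s hs).2
  simpa [Real.norm_of_nonneg ht.1] using
    (convex_Icc (0 : ℝ) 1).norm_image_sub_le_of_norm_hasDerivWithin_le
      (fun s hs ↦ (hasDerivAt_log_one_sub_ofReal_mul (h s hs).1).hasDerivWithinAt) hderiv
      (left_mem_Icc.2 zero_le_one) ht

lemma integral_inv_one_sub_ofReal_mul {z : ℂ} (hz0 : z ≠ 0) (hz : 1 - z ∈ slitPlane) :
    ∫ t in (0 : ℝ)..1, (1 - t * z)⁻¹ = -log (1 - z) / z := by
  have := log_inv_eq_integral hz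
  rw [log_inv _ (slitPlane_arg_ne_pi hz)] at this
  simp only [real_smul] at this
  exact eq_div_of_mul_eq hz0 (by rw [mul_comm, this])

lemma continuousOn_log_one_sub_ofReal_mul_div {z : ℂ}
    (h : ∀ t ∈ Icc (0 : ℝ) 1, 1 - t * z ∈ slitPlane) :
    ContinuousOn (fun t : ℝ ↦ log (1 - t * z) / t) (Ioc 0 1) :=
  ContinuousOn.div (fun t ht ↦ (hasDerivAt_log_one_sub_ofReal_mul
    (h t (Ioc_subset_Icc_self ht))).continuousAt.continuousWithinAt)
    (by fun_prop) fun t ht ↦ ofReal_ne_zero.2 ht.1.ne'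

lemma intervalIntegrable_log_one_sub_ofReal_mul_div {z : ℂ} {r : ℝ}
    (h : ∀ t ∈ Icc (0 : ℝ) 1, 1 - t * z ∈ slitPlane ∧ r ≤ ‖1 - t * z‖) (hr : 0 < r) :
    IntervalIntegrable (fun t : ℝ ↦ log (1 - t * z) / t) volume 0 1 := by
  rw [intervalIntegrable_iff, uIoc_of_le zero_le_one]
  refine Integrable.mono' (integrable_const (‖z‖ / r))
    ((continuousOn_log_one_sub_ofReal_mul_div fun t ht ↦ (h t ht).1).aestronglyMeasurable
      measurableSet_Ioc) ((ae_restrict_iff' measurableSet_Ioc).2 (ae_of_all _ fun t ht ↦ ?_))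
  rw [norm_div, norm_real, Real.norm_of_nonneg ht.1.le, div_le_iff₀ ht.1]
  exact norm_log_one_sub_ofReal_mul_le h hr (Ioc_subset_Icc_self ht)

theorem hasDerivAt_Li2 {z : ℂ} (hz0 : z ≠ 0) (hz : 1 - z ∈ slitPlane) :
    HasDerivAt Li2 (-log (1 - z) / z) z := by
  obtain ⟨ε, hε, hball⟩ := exists_ball_forall_one_sub_mul_mem_slitPlane hz
  have hIoc : Ι (0 : ℝ) 1 = Ioc 0 1 := uIoc_of_le zero_le_one
  have hz_ball := hball z (mem_ball_self hε)
  have key := (hasDerivAt_integral_of_dominated_loc_of_deriv_le (μ := volume)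
    (bound := fun _ ↦ 1 / ε) (F' := fun x t ↦ -(1 - (t : ℂ) * x)⁻¹) (ball_mem_nhds z hε)
    (Filter.eventually_of_mem (ball_mem_nhds z hε) fun x hx ↦ by
      rw [hIoc]
      exact (continuousOn_log_one_sub_ofReal_mul_div fun t ht ↦
        (hball x hx t ht).1).aestronglyMeasurable measurableSet_Ioc)
    (intervalIntegrable_log_one_sub_ofReal_mul_div hz_ball hε)
    (by
      rw [hIoc]
      refine ContinuousOn.aestronglyMeasurable ?_ measurableSet_Ioc
      exact ((continuousOn_const.sub (by fun_prop)).inv₀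
        fun t ht ↦ slitPlane_ne_zero (hz_ball t (Ioc_subset_Icc_self ht)).1).neg)
    (ae_of_all _ fun t ht x hx ↦ by
      rw [hIoc] at ht
      rw [norm_neg, norm_inv, one_div]
      exact inv_anti₀ hε (hball x hx t (Ioc_subset_Icc_self ht)).2)
    intervalIntegrable_const
    (ae_of_all _ fun t ht x hx ↦ by
      rw [hIoc] at ht
      have hslit := (hball x hx t (Ioc_subset_Icc_self ht)).1
      have hlin : HasDerivAt (fun x : ℂ ↦ 1 - t * x) (-t) x := by
        simpa using ((hasDerivAt_id x).const_mul (t : ℂ)).const_sub 1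
      refine ((hlin.clog hslit).div_const (t : ℂ)).congr_deriv ?_
      have := slitPlane_ne_zero hslit
      have : (t : ℂ) ≠ 0 := ofReal_ne_zero.2 ht.1.ne'
      field_simp)).2
  rw [intervalIntegral.integral_neg, integral_inv_one_sub_ofReal_mul hz0 hz] at key
  exact key.neg.congr_deriv (neg_neg _)

noncomputable def blochWignerFDeriv (z : ℂ) : ℂ →L[ℝ] ℝ :=
  -Real.log ‖1 - z‖ • imCLM.comp (ContinuousLinearMap.mul ℝ ℂ z⁻¹) -
    Real.log ‖z‖ • imCLM.comp (ContinuousLinearMap.mul ℝ ℂ (1 - z)⁻¹)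

lemma blochWignerFDeriv_apply (z v : ℂ) : blochWignerFDeriv z v =
    -Real.log ‖1 - z‖ * (z⁻¹ * v).im - Real.log ‖z‖ * ((1 - z)⁻¹ * v).im := by
  simp [blochWignerFDeriv]

theorem hasFDerivAt_blochWigner {z : ℂ} (hz : z ∈ slitPlane) (h1z : 1 - z ∈ slitPlane) :
    HasFDerivAt blochWigner (blochWignerFDeriv z) z := by
  have hLi2 := imCLM.hasFDerivAt.comp z
    ((hasDerivAt_Li2 (slitPlane_ne_zero hz) h1z).hasFDerivAt.restrictScalars ℝ)
  have harg := imCLM.hasFDerivAt.comp z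
    ((((hasDerivAt_id z).const_sub 1).clog h1z).hasFDerivAt.restrictScalars ℝ)
  have hlog := reCLM.hasFDerivAt.comp z ((hasDerivAt_log hz).hasFDerivAt.restrictScalars ℝ)
  have hfun : blochWigner = fun w ↦ (Li2 w).im + (log (1 - w)).im * (log w).re := by
    ext w; rw [blochWigner, log_im, log_re]
  rw [hfun]
  refine (hLi2.add (harg.mul hlog)).congr_fderiv (ContinuousLinearMap.ext fun v ↦ ?_)
  simp only [blochWignerFDeriv_apply, add_apply, smul_apply, smul_eq_mul,
    Function.comp_apply, ContinuousLinearMap.comp_apply, ContinuousLinearMap.coe_restrictScalars',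
    ContinuousLinearMap.toSpanSingleton_apply, imCLM_apply, reCLM_apply, log_im, log_re, id_eq,
    div_eq_mul_inv, mul_re, mul_im, inv_re, inv_im, neg_im, sub_re, sub_im, one_re, one_im,
    neg_mul, mul_neg, one_mul, zero_sub, neg_neg, sub_neg_eq_add, neg_add_rev]
  ring

lemma one_sub_inv_one_sub {z : ℂ} (hz : 1 - z ≠ 0) : 1 - (1 - z)⁻¹ = -z / (1 - z) := by
  field_simp
  ring

lemma blochWignerFDeriv_inv_one_sub_apply {z : ℂ} (hz0 : z ≠ 0) (hz1 : 1 - z ≠ 0) (v : ℂ) :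
    blochWignerFDeriv (1 - z)⁻¹ (v / (1 - z) ^ 2) = blochWignerFDeriv z v := by
  have hnorm : Real.log ‖1 - (1 - z)⁻¹‖ = Real.log ‖z‖ - Real.log ‖1 - z‖ := by
    rw [one_sub_inv_one_sub hz1, norm_div, norm_neg,
      Real.log_div (norm_ne_zero_iff.2 hz0) (norm_ne_zero_iff.2 hz1)]
  have h1 : (1 - z)⁻¹⁻¹ * (v / (1 - z) ^ 2) = (1 - z)⁻¹ * v := by field_simp
  have h2 : (1 - (1 - z)⁻¹)⁻¹ * (v / (1 - z) ^ 2) = -(z⁻¹ * v + (1 - z)⁻¹ * v) := by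
    rw [one_sub_inv_one_sub hz1]; field_simp; ring
  rw [blochWignerFDeriv_apply, blochWignerFDeriv_apply, hnorm, h1, h2, norm_inv, Real.log_inv,
    neg_im, add_im]
  ring

lemma mem_slitPlane_and_one_sub_mem_of_im_pos {z : ℂ} (hz : 0 < z.im) :
    z ∈ slitPlane ∧ 1 - z ∈ slitPlane :=
  ⟨Or.inr hz.ne', Or.inr (by simpa using hz.ne')⟩

lemma im_inv_one_sub_pos {z : ℂ} (hz : 0 < z.im) : 0 < ((1 - z)⁻¹).im := by
  have := normSq_pos.2 (slitPlane_ne_zero (mem_slitPlane_and_one_sub_mem_of_im_pos hz).2)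
  simpa [inv_im] using div_pos hz this

lemma hasFDerivAt_blochWigner_sub_blochWigner_inv_one_sub {z : ℂ} (hz : 0 < z.im) :
    HasFDerivAt (fun w ↦ blochWigner w - blochWigner (1 - w)⁻¹) (0 : ℂ →L[ℝ] ℝ) z := by
  obtain ⟨hzs, hz1s⟩ := mem_slitPlane_and_one_sub_mem_of_im_pos hz
  obtain ⟨hgs, hg1s⟩ := mem_slitPlane_and_one_sub_mem_of_im_pos (im_inv_one_sub_pos hz)
  have hg : HasDerivAt (fun w : ℂ ↦ (1 - w)⁻¹) ((1 - z) ^ 2)⁻¹ z :=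
    (((hasDerivAt_id z).const_sub 1).inv (slitPlane_ne_zero hz1s)).congr_deriv (by simp)
  refine ((hasFDerivAt_blochWigner hzs hz1s).sub ((hasFDerivAt_blochWigner hgs hg1s).comp z
    (hg.hasFDerivAt.restrictScalars ℝ))).congr_fderiv (ContinuousLinearMap.ext fun v ↦ ?_)
  simp [← blochWignerFDeriv_inv_one_sub_apply (slitPlane_ne_zero hzs) (slitPlane_ne_zero hz1s) v,
    div_eq_mul_inv]

lemma exists_inv_one_sub_eq_self : ∃ ζ : ℂ, 0 < ζ.im ∧ (1 - ζ)⁻¹ = ζ := by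
  refine ⟨⟨1 / 2, √3 / 2⟩, by positivity, inv_eq_of_mul_eq_one_left (Complex.ext ?_ ?_)⟩ <;>
    simp only [one_div, mul_re, mul_im, sub_re, sub_im, one_re, one_im, zero_sub, mul_neg,
      sub_neg_eq_add] <;>
    nlinarith [Real.mul_self_sqrt (show (0 : ℝ) ≤ 3 by norm_num)]

theorem blochWigner_inv_one_sub {z : ℂ} (hz : 0 < z.im) :
    blochWigner (1 - z)⁻¹ = blochWigner z := by
  obtain ⟨ζ, hζ, hζfix⟩ := exists_inv_one_sub_eq_self
  have hconst := (isOpen_lt continuous_const continuous_im).is_const_of_fderiv_eq_zero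
    (convex_halfSpace_im_gt 0).isPreconnected
    (fun w hw ↦ (hasFDerivAt_blochWigner_sub_blochWigner_inv_one_sub hw).differentiableAt
      |>.differentiableWithinAt)
    (fun w hw ↦ (hasFDerivAt_blochWigner_sub_blochWigner_inv_one_sub hw).fderiv) hz hζ
  rw [hζfix, sub_self] at hconst
  linarith

/-- For `z` in the upper half plane, `D(z) = D((z-1)/z) = D(1/(1-z))`. -/
theorem stmt3 (z : ℂ) (hz : 0 < z.im) :
    blochWigner z = blochWigner ((z - 1) / z) ∧
      blochWigner z = blochWigner (1 / (1 - z)) := by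
  have hz1 := slitPlane_ne_zero (mem_slitPlane_and_one_sub_mem_of_im_pos hz).2
  have hinv : (1 - (1 - z)⁻¹)⁻¹ = (z - 1) / z := by
    rw [one_sub_inv_one_sub hz1, inv_div, div_neg, ← neg_div, neg_sub]
  refine ⟨?_, by rw [one_div, blochWigner_inv_one_sub hz]⟩
  rw [← blochWigner_inv_one_sub hz, ← blochWigner_inv_one_sub (im_inv_one_sub_pos hz), hinv]
end

section
/- If z lies in the upper half plane ℝ + i·ℝ_{>0} and z' = 1/(1−z), z'' = (z−1)/z, then Log(z) + Log(z') + Log(z'') = iπ, where Log is the principal logarithm. -/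
/-!
Each of `z`, `z' = 1/(1-z)`, `z'' = (z-1)/z` lies in the upper half plane, so each principal
argument is in `(0, π)`, and `z z' z'' = -1`. Hence the sum `S` of the three logarithms satisfies
`exp S = -1`, i.e. `S = iπ + 2πik`, and `Im S ∈ (0, 3π)` forces `k = 0`.
-/

namespace Complex

open Real

lemma arg_mem_Ioo_of_im_pos {w : ℂ} (hw : 0 < w.im) : arg w ∈ Set.Ioo 0 π :=
  ⟨(arg_nonneg_iff.mpr hw.le).lt_of_ne fun h => hw.ne' (arg_eq_zero_iff.mp h.symm).2,
    arg_lt_pi_iff.mpr (Or.inr hw.ne')⟩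

lemma ne_zero_of_im_pos {w : ℂ} (hw : 0 < w.im) : w ≠ 0 :=
  fun h => hw.ne' (by simp [h])

lemma im_neg_inv_pos {w : ℂ} (hw : 0 < w.im) : 0 < (-w⁻¹).im := by
  rw [neg_im, inv_im, neg_div, neg_neg]
  exact div_pos hw (normSq_pos.mpr (ne_zero_of_im_pos hw))

lemma im_one_div_one_sub_pos {z : ℂ} (hz : 0 < z.im) : 0 < (1 / (1 - z)).im := by
  have h := im_neg_inv_pos (w := z - 1) (by simpa using hz)
  rwa [← inv_neg, neg_sub, ← one_div] at h

lemma im_sub_one_div_self_pos {z : ℂ} (hz : 0 < z.im) : 0 < ((z - 1) / z).im := by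
  have h := im_neg_inv_pos hz
  rwa [sub_div, div_self (ne_zero_of_im_pos hz), sub_im, one_im, zero_sub,
    ← neg_im, one_div]

lemma log_add_log_add_log_eq_pi_mul_I_of_mul_eq_neg_one {a b c : ℂ} (ha : 0 < a.im)
    (hb : 0 < b.im) (hc : 0 < c.im) (habc : a * b * c = -1) :
    log a + log b + log c = π * I := by
  obtain ⟨n, hn⟩ : ∃ n : ℤ, log a + log b + log c = π * I + n * (2 * π * I) := by
    rw [← exp_eq_exp_iff_exists_int, exp_add, exp_add, exp_log (ne_zero_of_im_pos ha),
      exp_log (ne_zero_of_im_pos hb), exp_log (ne_zero_of_im_pos hc), habc, exp_pi_mul_I]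
  have him : arg a + arg b + arg c = π + n * (2 * π) := by simpa [log_im] using congrArg im hn
  obtain ⟨ha₀, ha₁⟩ := arg_mem_Ioo_of_im_pos ha
  obtain ⟨hb₀, hb₁⟩ := arg_mem_Ioo_of_im_pos hb
  obtain ⟨hc₀, hc₁⟩ := arg_mem_Ioo_of_im_pos hc
  obtain rfl : n = 0 := by
    have : n < 1 := by exact_mod_cast (by nlinarith [pi_pos] : (n : ℝ) < 1)
    have : -1 < n := by exact_mod_cast (by nlinarith [pi_pos] : (-1 : ℝ) < n)
    omega
  simpa using hn

end Complex

/-- If `z` lies in the upper half plane and `z' = 1/(1-z)`, `z'' = (z-1)/z`, then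
`Log(z) + Log(z') + Log(z'') = iπ`. -/
theorem stmt12 (z : ℂ) (hz : 0 < z.im) :
    Complex.log z + Complex.log (1 / (1 - z)) + Complex.log ((z - 1) / z) =
      (Real.pi : ℂ) * Complex.I := by
  have hz0 := Complex.ne_zero_of_im_pos hz
  have h1z : 1 - z ≠ 0 := fun h => hz.ne' (by simp [← sub_eq_zero.mp h])
  refine Complex.log_add_log_add_log_eq_pi_mul_I_of_mul_eq_neg_one hz
    (Complex.im_one_div_one_sub_pos hz) (Complex.im_sub_one_div_self_pos hz) ?_
  field_simp
  ring
end

section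
/- For p ≥ 2 define the space A of tuples (a_1,b_1,c_1,…,a_p,b_p,c_p,a_U,b_U,c_U,a_V,b_V,c_V,a_W,b_W,c_W) ∈ (0,π)^{3(p+3)} satisfying a_k+b_k+c_k = π for each index, together with: 2a_U = a_V + c_W; 2b_1 + c_2 = 2π; c_{k−1} + 2b_k + c_{k+1} = 2π for 2 ≤ k ≤ p−1; c_{p−1} + 2b_p + b_U + b_V + a_W = 2π; and 3c_p + (a_U + a_V + c_W) + 3(c_U + c_V + b_W) = 3π. Then A is non-empty. -/
open Real in
/-- For `p ≥ 2`, the space of angle structures on the ideal triangulation `X_n` of the odd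
twist knot complement (`n = 2p+3`) is non-empty. -/
theorem stmt14 (p : ℕ) (hp : 2 ≤ p) :
    ∃ (a b c : ℕ → ℝ) (aU bU cU aV bV cV aW bW cW : ℝ),
      (∀ k, 1 ≤ k → k ≤ p →
        a k ∈ Set.Ioo 0 π ∧ b k ∈ Set.Ioo 0 π ∧ c k ∈ Set.Ioo 0 π ∧
          a k + b k + c k = π) ∧
      aU ∈ Set.Ioo 0 π ∧ bU ∈ Set.Ioo 0 π ∧ cU ∈ Set.Ioo 0 π ∧
      aV ∈ Set.Ioo 0 π ∧ bV ∈ Set.Ioo 0 π ∧ cV ∈ Set.Ioo 0 π ∧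
      aW ∈ Set.Ioo 0 π ∧ bW ∈ Set.Ioo 0 π ∧ cW ∈ Set.Ioo 0 π ∧
      aU + bU + cU = π ∧ aV + bV + cV = π ∧ aW + bW + cW = π ∧
      2 * aU = aV + cW ∧
      2 * b 1 + c 2 = 2 * π ∧
      (∀ k, 2 ≤ k → k ≤ p - 1 → c (k - 1) + 2 * b k + c (k + 1) = 2 * π) ∧
      c (p - 1) + 2 * b p + bU + bV + aW = 2 * π ∧
      3 * c p + (aU + aV + cW) + 3 * (cU + cV + bW) = 3 * π := by
  have hπ := Real.pi_pos
  obtain ⟨P, hPdef⟩ : ∃ P : ℝ, P = (p : ℝ) := ⟨_, rfl⟩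
  have hP : (2:ℝ) ≤ P := by rw [hPdef]; exact_mod_cast hp
  obtain ⟨ε, hε⟩ : ∃ ε : ℝ, ε = π / (4 * (P + 1) ^ 2) := ⟨_, rfl⟩
  have hP1 : (0:ℝ) < P + 1 := by linarith
  have hε0 : 0 < ε := by rw [hε]; positivity
  have hεπ : ε * (4 * (P + 1) ^ 2) = π := by
    rw [hε]; field_simp
  have bound : ∀ x : ℝ, 0 ≤ x → x < 4 * (P + 1) ^ 2 → ε * x < π := by
    intro x hx0 hx
    calc ε * x < ε * (4 * (P + 1) ^ 2) := mul_lt_mul_of_pos_left hx hε0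
      _ = π := hεπ
  have hQ0 : 0 ≤ ε * P ^ 2 := by positivity
  have hQ3 : 3 * (ε * P ^ 2) < π := by
    have := bound (3 * P ^ 2) (by positivity) (by nlinarith)
    linarith
  refine ⟨(fun k => if k = p then π/2 - ε*(P^2+2*P-1)/2 else ε),
    (fun k => if k = p then π/2 - ε*(P-1)^2/2 else π - ε*((k:ℝ)^2+1)),
    (fun k => ε*(k:ℝ)^2),
    π/2 + ε*P^2/2, π/3, π/6 - ε*P^2/2,
    π/2 + ε*P^2/2, π/3, π/6 - ε*P^2/2,
    π/3, π/6 - ε*P^2/2, π/2 + ε*P^2/2, ?_,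
    ⟨by linarith, by linarith⟩, ⟨by linarith, by linarith⟩, ⟨by linarith, by linarith⟩,
    ⟨by linarith, by linarith⟩, ⟨by linarith, by linarith⟩, ⟨by linarith, by linarith⟩,
    ⟨by linarith, by linarith⟩, ⟨by linarith, by linarith⟩, ⟨by linarith, by linarith⟩,
    by ring, by ring, by ring, by ring, ?_, ?_, ?_, ?_⟩
  · intro k hk1 hkp
    have hK1 : (1:ℝ) ≤ (k:ℝ) := by exact_mod_cast hk1
    have hKP : (k:ℝ) ≤ P := by rw [hPdef]; exact_mod_cast hkp
    have hcK : ε * (k:ℝ)^2 < π := by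
      apply bound _ (by positivity)
      nlinarith
    have hcK0 : 0 < ε * (k:ℝ)^2 := by positivity
    by_cases hk : k = p
    · have hKeq : (k:ℝ) = P := by rw [hk, hPdef]
      have h1 : ε * (P^2 + 2*P - 1) < π := by
        apply bound _ (by nlinarith)
        nlinarith
      have h2 : ε * (P-1)^2 < π := by
        apply bound _ (by positivity)
        nlinarith
      have h3 : 0 ≤ ε * (P-1)^2 := by positivity
      have h4 : 0 ≤ ε * (P^2 + 2*P - 1) := by nlinarith
      simp only [hk, eq_self_iff_true, if_true]
      rw [← hPdef]
      refine ⟨⟨by linarith, by linarith⟩, ⟨by linarith, by linarith⟩,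
        ⟨by positivity, by linarith⟩, by ring⟩
    · have hb : ε * ((k:ℝ)^2 + 1) < π := by
        apply bound _ (by positivity)
        nlinarith
      have hb0 : 0 < ε * ((k:ℝ)^2 + 1) := by positivity
      have hεπ' : ε < π := by
        have := bound 1 (by norm_num) (by nlinarith)
        linarith
      simp only [if_neg hk]
      refine ⟨⟨hε0, hεπ'⟩, ⟨by linarith, by linarith⟩,
        ⟨hcK0, hcK⟩, by ring⟩
  · have h1 : (1:ℕ) ≠ p := by omega
    simp only [if_neg h1]
    push_cast
    ring
  · intro k hk2 hkp1
    have hk : k ≠ p := by omega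
    simp only [if_neg hk]
    have hc1 : ((k - 1 : ℕ) : ℝ) = (k:ℝ) - 1 := by
      have h1 : (1:ℕ) ≤ k := by omega
      push_cast [Nat.cast_sub h1]
      ring
    rw [hc1]
    push_cast
    ring
  · have hc1 : ((p - 1 : ℕ) : ℝ) = P - 1 := by
      have h1 : (1:ℕ) ≤ p := by omega
      rw [hPdef]
      push_cast [Nat.cast_sub h1]
      ring
    simp only [eq_self_iff_true, if_true, hc1]
    ring
  · simp only [eq_self_iff_true, if_true, ← hPdef]
    ring
end
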